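/- (Theorem 3.) Let Y and (Ŷₙ)ₙ be random variables, each nonnegative almost surely, with continuous (atomless) cumulative distribution functions F and Fₙ, and suppose δₙ := sup_{y ∈ [0, ∞)} |Fₙ(y) − F(y)| → 0 as n → ∞. Let l̄ > 0, let a : [0, l̄] → ℝ be monotone with 0 ≤ a(l) ≤ a(l̄) < ∞ for all l and a(l) → 0 as l → 0, and let {g_l}_{l ∈ [0, l̄]} be a family of functions g_l : ℝ → ℝ, each differentiable on [0, a(l̄)] with |g_l'(y)| ≤ K for all y ∈ [0, a(l̄)] and all l, and uniformly bounded: |g_l(y)| ≤ M := g_{l̄}(0) < ∞. Define r₃(l) = E[g_l(Y) · 1{Y < a(l)}] and r̂₃,ₙ(l) = E[g_l(Ŷₙ) · 1{Ŷₙ < a(l)}]. Then sup_{l ∈ [0, l̄]} |r̂₃,ₙ(l) − r₃(l)| ≤ (2M + K·a(l̄))·δₙ, and consequently sup_{l ∈ [0, l̄]} |r̂₃,ₙ(l) − r₃(l)| → 0 as n → ∞. -/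

import Mathlib

/-!
For `y ∈ [0, b)` the fundamental theorem of calculus gives `g(y) = g(b) - ∫_y^b g'`, so by Fubini
and since `Y ≥ 0` has no atoms, `E[g(Y) 1{Y < b}] = g(b) F(b) - ∫_0^b g'(t) F(t) dt`. Subtracting
the same identity for `Ŷₙ` bounds the difference by `|g(b)| δₙ + K b δₙ`, uniformly in the loan
level `l` (with `g = g_l`, `b = a(l) ≤ a(l̄)`).
-/

open MeasureTheory Filter Set
open ProbabilityTheory

theorem setIntegral_Ico_eq_sub_integral_mul_measureReal (μ : Measure ℝ) [IsFiniteMeasure μ]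
    {G G' : ℝ → ℝ} {a b : ℝ} (hGc : ContinuousOn G (Icc a b))
    (hG' : ∀ t ∈ Ioo a b, HasDerivAt G (G' t) t) (hG'int : IntegrableOn G' (Ioc a b)) :
    ∫ y in Ico a b, G y ∂μ = G b * μ.real (Ico a b) - ∫ t in Ioc a b, G' t * μ.real (Ico a t) := by
  set Φ : ℝ × ℝ → ℝ := {p | p.1 < p.2}.indicator fun p => G' p.2
  have hΦ : Integrable Φ ((μ.restrict (Ico a b)).prod (volume.restrict (Ioc a b))) := by
    refine Integrable.indicator ?_ (measurableSet_lt measurable_fst measurable_snd)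
    simpa using (integrable_const (1 : ℝ)).mul_prod hG'int
  have hFTC : ∀ y ∈ Ico a b, ∫ t in Ioc a b, Φ (y, t) = G b - G y := by
    intro y hy
    have hΦy : (fun t => Φ (y, t)) = (Ioi y).indicator G' := by
      ext t; simp [Φ, indicator_apply]
    rw [hΦy, setIntegral_indicator measurableSet_Ioi, Ioc_inter_Ioi, max_eq_right hy.1,
      ← intervalIntegral.integral_of_le hy.2.le]
    exact intervalIntegral.integral_eq_sub_of_hasDerivAt_of_le hy.2.le
      (hGc.mono (Icc_subset_Icc_left hy.1))
      (fun t ht => hG' t ⟨hy.1.trans_lt ht.1, ht.2⟩)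
      ((intervalIntegrable_iff_integrableOn_Ioc_of_le hy.2.le).2
        (hG'int.mono_set (Ioc_subset_Ioc_left hy.1)))
  have hlayer : ∀ t ∈ Ioc a b, ∫ y in Ico a b, Φ (y, t) ∂μ = G' t * μ.real (Ico a t) := by
    intro t ht
    have hΦt : (fun y => Φ (y, t)) = (Iio t).indicator fun _ => G' t := by
      ext y; simp [Φ, indicator_apply]
    rw [hΦt, setIntegral_indicator measurableSet_Iio, Ico_inter_Iio, min_eq_right ht.2,
      setIntegral_const, smul_eq_mul, mul_comm]
  calc ∫ y in Ico a b, G y ∂μ = ∫ y in Ico a b, (G b - ∫ t in Ioc a b, Φ (y, t)) ∂μ :=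
        setIntegral_congr_fun measurableSet_Ico fun y hy => by rw [hFTC y hy]; ring
    _ = G b * μ.real (Ico a b) - ∫ y in Ico a b, (∫ t in Ioc a b, Φ (y, t)) ∂μ := by
        rw [integral_sub (integrable_const _) hΦ.integral_prod_left, setIntegral_const,
          smul_eq_mul, mul_comm]
    _ = G b * μ.real (Ico a b) - ∫ t in Ioc a b, G' t * μ.real (Ico a t) := by
        rw [integral_integral_swap (f := fun y t => Φ (y, t)) hΦ,
          setIntegral_congr_fun measurableSet_Ioc hlayer]

theorem measure_singleton_eq_zero_of_continuous_cdf (μ : Measure ℝ) [IsProbabilityMeasure μ]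
    (hF : Continuous (cdf μ)) (t : ℝ) : μ {t} = 0 := by
  rw [← measure_cdf μ, StieltjesFunction.measure_singleton,
    (hF.continuousWithinAt (s := Iic t)).leftLim_eq, sub_self, ENNReal.ofReal_zero]

theorem measureReal_Ico_zero_eq_cdf (μ : Measure ℝ) [IsProbabilityMeasure μ]
    (hμ0 : μ (Iio 0) = 0) (hF : Continuous (cdf μ)) {t : ℝ} (ht : 0 ≤ t) :
    μ.real (Ico 0 t) = cdf μ t := by
  have hIcc : (Iio 0 ∪ Icc 0 t : Set ℝ) =ᵐ[μ] Icc 0 t :=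
    union_ae_eq_right_of_ae_eq_empty (ae_eq_empty.2 hμ0)
  rw [cdf_eq_real, ← Iio_union_Icc_eq_Iic ht, measureReal_congr hIcc,
    measureReal_congr (Ico_ae_eq_Icc' (measure_singleton_eq_zero_of_continuous_cdf μ hF t))]

theorem integral_indicator_Iio_eq_sub_integral_mul_cdf (μ : Measure ℝ) [IsProbabilityMeasure μ]
    (hμ0 : μ (Iio 0) = 0) (hF : Continuous (cdf μ)) {G G' : ℝ → ℝ} {b : ℝ} (hb : 0 ≤ b)
    (hGc : ContinuousOn G (Icc 0 b)) (hG' : ∀ t ∈ Ioo 0 b, HasDerivAt G (G' t) t)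
    (hG'int : IntegrableOn G' (Ioc 0 b)) :
    ∫ y, (Iio b).indicator G y ∂μ = G b * cdf μ b - ∫ t in Ioc 0 b, G' t * cdf μ t := by
  have hIio : Iio b =ᵐ[μ] Ico 0 b := by
    rw [← Iio_union_Ico_eq_Iio hb]
    exact union_ae_eq_right_of_ae_eq_empty (ae_eq_empty.2 hμ0)
  rw [integral_congr_ae (indicator_ae_eq_of_ae_eq_set hIio), integral_indicator measurableSet_Ico,
    setIntegral_Ico_eq_sub_integral_mul_measureReal μ hGc hG' hG'int,
    measureReal_Ico_zero_eq_cdf μ hμ0 hF hb]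
  congr 1
  exact setIntegral_congr_fun measurableSet_Ioc fun t ht => by
    rw [measureReal_Ico_zero_eq_cdf μ hμ0 hF ht.1.le]

theorem abs_integral_indicator_Iio_sub_le (μ ν : Measure ℝ) [IsProbabilityMeasure μ]
    [IsProbabilityMeasure ν] (hμ0 : μ (Iio 0) = 0) (hν0 : ν (Iio 0) = 0)
    (hFμ : Continuous (cdf μ)) (hFν : Continuous (cdf ν)) {G G' : ℝ → ℝ} {b K d : ℝ} (hb : 0 ≤ b)
    (hGc : ContinuousOn G (Icc 0 b)) (hG' : ∀ t ∈ Ioo 0 b, HasDerivAt G (G' t) t)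
    (hG'int : IntegrableOn G' (Ioc 0 b)) (hK : ∀ t ∈ Ioc 0 b, |G' t| ≤ K)
    (hd : ∀ y, 0 ≤ y → |cdf ν y - cdf μ y| ≤ d) :
    |(∫ y, (Iio b).indicator G y ∂ν) - ∫ y, (Iio b).indicator G y ∂μ| ≤ (|G b| + K * b) * d := by
  have hint (ρ : Measure ℝ) [IsProbabilityMeasure ρ] :
      IntegrableOn (fun t => G' t * cdf ρ t) (Ioc 0 b) :=
    hG'int.mul_bdd (monotone_cdf ρ).measurable.aestronglyMeasurable (c := 1) <|
      ae_of_all _ fun t => by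
        rw [Real.norm_of_nonneg (cdf_nonneg ρ t)]; exact cdf_le_one ρ t
  have hsub : (∫ t in Ioc 0 b, G' t * cdf ν t) - ∫ t in Ioc 0 b, G' t * cdf μ t
      = ∫ t in Ioc 0 b, G' t * (cdf ν t - cdf μ t) := by
    rw [← integral_sub (hint ν) (hint μ)]
    simp only [mul_sub]
  have hbound : |∫ t in Ioc 0 b, G' t * (cdf ν t - cdf μ t)| ≤ K * d * b := by
    have := norm_setIntegral_le_of_norm_le_const (f := fun t => G' t * (cdf ν t - cdf μ t))
      (measure_Ioc_lt_top (μ := volume)) fun t ht => by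
        rw [Real.norm_eq_abs, abs_mul]
        exact mul_le_mul (hK t ht) (hd t ht.1.le) (abs_nonneg _) ((abs_nonneg _).trans (hK t ht))
    rwa [Real.volume_real_Ioc_of_le hb, sub_zero] at this
  rw [integral_indicator_Iio_eq_sub_integral_mul_cdf ν hν0 hFν hb hGc hG' hG'int,
    integral_indicator_Iio_eq_sub_integral_mul_cdf μ hμ0 hFμ hb hGc hG' hG'int]
  calc |G b * cdf ν b - (∫ t in Ioc 0 b, G' t * cdf ν t)
          - (G b * cdf μ b - ∫ t in Ioc 0 b, G' t * cdf μ t)|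
      = |G b * (cdf ν b - cdf μ b) - ∫ t in Ioc 0 b, G' t * (cdf ν t - cdf μ t)| := by
        rw [← hsub]; ring_nf
    _ ≤ |G b| * |cdf ν b - cdf μ b| + K * d * b := by
        rw [← abs_mul]; exact (abs_sub _ _).trans (add_le_add_right hbound _)
    _ ≤ (|G b| + K * b) * d := by
        linarith [mul_le_mul_of_nonneg_left (hd b hb) (abs_nonneg (G b))]

theorem integrableOn_Ioc_derivWithin_Icc {G : ℝ → ℝ} {a b A K : ℝ} (hbA : b ≤ A)
    (hK : ∀ y ∈ Icc a A, |derivWithin G (Icc a A) y| ≤ K) :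
    IntegrableOn (derivWithin G (Icc a A)) (Ioc a b) := by
  have hderiv : EqOn (deriv G) (derivWithin G (Icc a A)) (Ioo a b) := fun t ht =>
    (derivWithin_of_mem_nhds (Icc_mem_nhds ht.1 (ht.2.trans_le hbA))).symm
  rw [integrableOn_Ioc_iff_integrableOn_Ioo]
  refine IntegrableOn.congr_fun ?_ hderiv measurableSet_Ioo
  refine Measure.integrableOn_of_bounded measure_Ioo_lt_top.ne
    (measurable_deriv G).aestronglyMeasurable (M := K) ?_
  filter_upwards [ae_restrict_mem measurableSet_Ioo] with t ht
  rw [hderiv ht]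
  exact hK t ⟨ht.1.le, ht.2.le.trans hbA⟩

theorem abs_integral_indicator_Iio_sub_le_of_differentiableOn (μ ν : Measure ℝ)
    [IsProbabilityMeasure μ] [IsProbabilityMeasure ν] (hμ0 : μ (Iio 0) = 0) (hν0 : ν (Iio 0) = 0)
    (hFμ : Continuous (cdf μ)) (hFν : Continuous (cdf ν)) {G : ℝ → ℝ} {A b K d : ℝ}
    (hG : DifferentiableOn ℝ G (Icc 0 A)) (hK : ∀ y ∈ Icc 0 A, |derivWithin G (Icc 0 A) y| ≤ K)
    (hb : b ∈ Icc 0 A) (hd : ∀ y, 0 ≤ y → |cdf ν y - cdf μ y| ≤ d) :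
    |(∫ y, (Iio b).indicator G y ∂ν) - ∫ y, (Iio b).indicator G y ∂μ| ≤ (|G b| + K * b) * d := by
  refine abs_integral_indicator_Iio_sub_le μ ν hμ0 hν0 hFμ hFν hb.1
    (hG.continuousOn.mono (Icc_subset_Icc_right hb.2)) (fun t ht => ?_)
    (integrableOn_Ioc_derivWithin_Icc hb.2 hK) (fun t ht => hK t ⟨ht.1.le, ht.2.trans hb.2⟩) hd
  have hIcc : Icc 0 A ∈ nhds t := Icc_mem_nhds ht.1 (ht.2.trans_le hb.2)
  rw [derivWithin_of_mem_nhds hIcc]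
  exact ((hG t (mem_of_mem_nhds hIcc)).differentiableAt hIcc).hasDerivAt

theorem abs_cdf_sub_cdf_le_iSup (μ ν : Measure ℝ) [IsProbabilityMeasure μ] [IsProbabilityMeasure ν]
    {y : ℝ} (hy : 0 ≤ y) :
    |cdf ν y - cdf μ y| ≤ ⨆ z : Ici (0 : ℝ), |cdf ν z - cdf μ z| := by
  refine le_ciSup (f := fun z : Ici (0 : ℝ) => |cdf ν z - cdf μ z|) ⟨1, ?_⟩ ⟨y, hy⟩
  rintro _ ⟨z, rfl⟩
  exact abs_sub_le_of_nonneg_of_le (cdf_nonneg ν z) (cdf_le_one ν z) (cdf_nonneg μ z)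
    (cdf_le_one μ z)

theorem generalized_risk_uniform_convergence_general
    (μ : ProbabilityMeasure ℝ) (ν : ℕ → ProbabilityMeasure ℝ)
    (hμ0 : (μ : Measure ℝ) (Set.Iio 0) = 0)
    (hν0 : ∀ n, ((ν n : Measure ℝ)) (Set.Iio 0) = 0)
    (F : ℝ → ℝ) (Fn : ℕ → ℝ → ℝ)
    (hF : ∀ y, F y = ((μ : Measure ℝ) (Set.Iic y)).toReal)
    (hFn : ∀ n y, Fn n y = (((ν n : Measure ℝ)) (Set.Iic y)).toReal)
    (hFc : Continuous F) (hFnc : ∀ n, Continuous (Fn n))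
    (δ : ℕ → ℝ) (hδ : ∀ n, δ n = ⨆ y : Set.Ici (0 : ℝ), |Fn n y - F y|)
    (hδ0 : Tendsto δ atTop (nhds 0))
    (lbar K : ℝ) (hlbar : 0 < lbar)
    (a : ℝ → ℝ)
    (ha_nonneg : ∀ l ∈ Set.Icc (0 : ℝ) lbar, 0 ≤ a l)
    (ha_le : ∀ l ∈ Set.Icc (0 : ℝ) lbar, a l ≤ a lbar)
    (g : ℝ → ℝ → ℝ)
    (hgdiff : ∀ l ∈ Set.Icc (0 : ℝ) lbar, DifferentiableOn ℝ (g l) (Set.Icc 0 (a lbar)))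
    (hgK : ∀ l ∈ Set.Icc (0 : ℝ) lbar, ∀ y ∈ Set.Icc (0 : ℝ) (a lbar),
      |derivWithin (g l) (Set.Icc 0 (a lbar)) y| ≤ K)
    (hgM : ∀ l ∈ Set.Icc (0 : ℝ) lbar, ∀ y ∈ Set.Icc (0 : ℝ) (a lbar),
      |g l y| ≤ g lbar 0) :
    (∀ n, (⨆ l : Set.Icc (0 : ℝ) lbar,
        |(∫ y, (Set.Iio (a (l : ℝ))).indicator (g (l : ℝ)) y ∂(ν n : Measure ℝ))
          - ∫ y, (Set.Iio (a (l : ℝ))).indicator (g (l : ℝ)) y ∂(μ : Measure ℝ)|)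
        ≤ (2 * g lbar 0 + K * a lbar) * δ n)
    ∧ Tendsto (fun n => ⨆ l : Set.Icc (0 : ℝ) lbar,
        |(∫ y, (Set.Iio (a (l : ℝ))).indicator (g (l : ℝ)) y ∂(ν n : Measure ℝ))
          - ∫ y, (Set.Iio (a (l : ℝ))).indicator (g (l : ℝ)) y ∂(μ : Measure ℝ)|)
        atTop (nhds 0) := by
  obtain rfl : F = cdf (μ : Measure ℝ) := funext fun y => (hF y).trans (cdf_eq_real _ y).symm
  obtain rfl : Fn = fun n => ⇑(cdf (ν n : Measure ℝ)) :=
    funext₂ fun n y => (hFn n y).trans (cdf_eq_real _ y).symm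
  have hlbar_mem : lbar ∈ Icc 0 lbar := ⟨hlbar.le, le_rfl⟩
  have h0_mem : (0 : ℝ) ∈ Icc 0 (a lbar) := ⟨le_rfl, ha_nonneg lbar hlbar_mem⟩
  have hM : 0 ≤ g lbar 0 := (abs_nonneg _).trans (hgM lbar hlbar_mem 0 h0_mem)
  have hK : 0 ≤ K := (abs_nonneg _).trans (hgK lbar hlbar_mem 0 h0_mem)
  have hδ_nonneg (n : ℕ) : 0 ≤ δ n := hδ n ▸ Real.iSup_nonneg fun _ => abs_nonneg _
  have hbound (n : ℕ) (l : Icc (0 : ℝ) lbar) :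
      |(∫ y, (Iio (a l)).indicator (g l) y ∂(ν n : Measure ℝ))
        - ∫ y, (Iio (a l)).indicator (g l) y ∂(μ : Measure ℝ)|
        ≤ (2 * g lbar 0 + K * a lbar) * δ n := by
    obtain ⟨l, hl⟩ := l
    have hal : a l ∈ Icc 0 (a lbar) := ⟨ha_nonneg l hl, ha_le l hl⟩
    calc _ ≤ (|g l (a l)| + K * a l) * δ n :=
          abs_integral_indicator_Iio_sub_le_of_differentiableOn _ _ hμ0 (hν0 n) hFc (hFnc n)
            (hgdiff l hl) (hgK l hl) hal fun y hy => hδ n ▸ abs_cdf_sub_cdf_le_iSup _ _ hy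
      _ ≤ (2 * g lbar 0 + K * a lbar) * δ n := by
          refine mul_le_mul_of_nonneg_right ?_ (hδ_nonneg n)
          linarith [hgM l hl (a l) hal, mul_le_mul_of_nonneg_left hal.2 hK]
  have hsup (n : ℕ) :=
    Real.iSup_le (hbound n) (mul_nonneg (by linarith [mul_nonneg hK h0_mem.2]) (hδ_nonneg n))
  exact ⟨hsup, squeeze_zero (fun n => Real.iSup_nonneg fun _ => abs_nonneg _) hsup
    (by simpa using hδ0.const_mul (2 * g lbar 0 + K * a lbar))⟩

/-- Theorem 3: Let `Y` and `Ŷₙ` be nonnegative (a.s.) random variables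
(represented by their laws `μ` and `νₙ`) with continuous CDFs `F` and `Fₙ`, and suppose
`δₙ = sup_{y ∈ [0,∞)} |Fₙ(y) - F(y)| → 0`. Let `a : [0, l̄] → ℝ` be monotone with
`0 ≤ a(l) ≤ a(l̄)` and `a(l) → 0` as `l → 0`, and let each `g_l` be differentiable on
`[0, a(l̄)]` with `|g_l'| ≤ K` there and uniformly bounded by `M := g_{l̄}(0)`. With
`r₃(l) = E[g_l(Y)·1{Y < a(l)}]` and `r̂₃,ₙ(l) = E[g_l(Ŷₙ)·1{Ŷₙ < a(l)}]`, we have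
`sup_{l ∈ [0, l̄]} |r̂₃,ₙ(l) - r₃(l)| ≤ (2M + K·a(l̄))·δₙ → 0`. -/
theorem generalized_risk_uniform_convergence
    (μ : ProbabilityMeasure ℝ) (ν : ℕ → ProbabilityMeasure ℝ)
    (hμ0 : (μ : Measure ℝ) (Set.Iio 0) = 0)
    (hν0 : ∀ n, ((ν n : Measure ℝ)) (Set.Iio 0) = 0)
    (F : ℝ → ℝ) (Fn : ℕ → ℝ → ℝ)
    (hF : ∀ y, F y = ((μ : Measure ℝ) (Set.Iic y)).toReal)
    (hFn : ∀ n y, Fn n y = (((ν n : Measure ℝ)) (Set.Iic y)).toReal)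
    (hFc : Continuous F) (hFnc : ∀ n, Continuous (Fn n))
    (δ : ℕ → ℝ) (hδ : ∀ n, δ n = ⨆ y : Set.Ici (0 : ℝ), |Fn n y - F y|)
    (hδ0 : Tendsto δ atTop (nhds 0))
    (lbar K : ℝ) (hlbar : 0 < lbar)
    (a : ℝ → ℝ) (ha_mono : MonotoneOn a (Set.Icc 0 lbar))
    (ha_nonneg : ∀ l ∈ Set.Icc (0 : ℝ) lbar, 0 ≤ a l)
    (ha_le : ∀ l ∈ Set.Icc (0 : ℝ) lbar, a l ≤ a lbar)
    (ha0 : Tendsto a (nhdsWithin 0 (Set.Icc 0 lbar)) (nhds 0))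
    (g : ℝ → ℝ → ℝ)
    (hgdiff : ∀ l ∈ Set.Icc (0 : ℝ) lbar, DifferentiableOn ℝ (g l) (Set.Icc 0 (a lbar)))
    (hgK : ∀ l ∈ Set.Icc (0 : ℝ) lbar, ∀ y ∈ Set.Icc (0 : ℝ) (a lbar),
      |derivWithin (g l) (Set.Icc 0 (a lbar)) y| ≤ K)
    (hgM : ∀ l ∈ Set.Icc (0 : ℝ) lbar, ∀ y ∈ Set.Icc (0 : ℝ) (a lbar),
      |g l y| ≤ g lbar 0) :
    (∀ n, (⨆ l : Set.Icc (0 : ℝ) lbar,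
        |(∫ y, (Set.Iio (a (l : ℝ))).indicator (g (l : ℝ)) y ∂(ν n : Measure ℝ))
          - ∫ y, (Set.Iio (a (l : ℝ))).indicator (g (l : ℝ)) y ∂(μ : Measure ℝ)|)
        ≤ (2 * g lbar 0 + K * a lbar) * δ n)
    ∧ Tendsto (fun n => ⨆ l : Set.Icc (0 : ℝ) lbar,
        |(∫ y, (Set.Iio (a (l : ℝ))).indicator (g (l : ℝ)) y ∂(ν n : Measure ℝ))
          - ∫ y, (Set.Iio (a (l : ℝ))).indicator (g (l : ℝ)) y ∂(μ : Measure ℝ)|)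
        atTop (nhds 0) :=
  generalized_risk_uniform_convergence_general μ ν hμ0 hν0 F Fn hF hFn hFc hFnc δ hδ hδ0 lbar K
    hlbar a ha_nonneg ha_le g hgdiff hgK hgM
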